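/- arXiv:2307.01772 — 3 statements merged into one kernel-verified Lean document; each statement's English description precedes it below -/
import Mathlib

section
/- Let n > 1 be a real number and μ ≥ 2 an integer, and let H(1) ≥ H(2) ≥ ... ≥ H(μ) > 0 be real numbers with joint entropy H_joint satisfying H(1) ≤ H_joint ≤ Σ_{v=1}^{μ} H(v). Then the rate R = H(μ) / [Σ_{v=1}^{μ-1} H(v)/n^{v-1} + (1/n^{μ-1})(H_joint - Σ_{v=1}^{μ-1} H(v))] satisfies R ≥ (H(μ)/H(1)) · (1 - 1/n)/(1 - (1/n)^μ). -/
theorem pc_rate_lower_bound (n : ℝ) (hn : 1 < n) (μ : ℕ) (hμ : 2 ≤ μ)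
    (H : ℕ → ℝ) (hord : ∀ v ∈ Finset.Icc 1 (μ - 1), H (v + 1) ≤ H v)
    (hpos : 0 < H μ) (Hjoint : ℝ) (hjl : H 1 ≤ Hjoint)
    (hju : Hjoint ≤ ∑ v ∈ Finset.Icc 1 μ, H v) :
    H μ /
        (∑ v ∈ Finset.Icc 1 (μ - 1), H v / n ^ (v - 1) +
          (1 / n ^ (μ - 1)) * (Hjoint - ∑ v ∈ Finset.Icc 1 (μ - 1), H v)) ≥
      (H μ / H 1) * ((1 - 1 / n) / (1 - (1 / n) ^ μ)) := by
  have hn0 : (0:ℝ) < n := lt_trans one_pos hn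
  -- monotonicity
  have mono : ∀ a b : ℕ, 1 ≤ a → a ≤ b → b ≤ μ → H b ≤ H a := by
    intro a b ha hab
    induction hab with
    | refl => intro _; exact le_refl _
    | step hab ih =>
      rename_i b'
      intro hb
      have hb' : b' ≤ μ := le_trans (Nat.le_succ _) hb
      refine le_trans ?_ (ih hb')
      apply hord
      simp only [Finset.mem_Icc]
      exact ⟨le_trans ha hab, by omega⟩
  have h1μ : (1:ℕ) ≤ μ := by omega
  have hH1pos : 0 < H 1 := lt_of_lt_of_le hpos (mono 1 μ le_rfl h1μ le_rfl)
  have hHle1 : ∀ v ∈ Finset.Icc 1 (μ-1), H v ≤ H 1 := by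
    intro v hv
    simp only [Finset.mem_Icc] at hv
    exact mono 1 v le_rfl hv.1 (by omega)
  have hHge : ∀ v ∈ Finset.Icc 1 (μ-1), 0 < H v := by
    intro v hv
    simp only [Finset.mem_Icc] at hv
    exact lt_of_lt_of_le hpos (mono v μ hv.1 (by omega) le_rfl)
  set A := ∑ v ∈ Finset.Icc 1 (μ - 1), H v / n ^ (v - 1) with hA
  set D := A + (1 / n ^ (μ - 1)) * (Hjoint - ∑ v ∈ Finset.Icc 1 (μ - 1), H v) with hD
  have hpow : ∀ v : ℕ, v ≤ μ - 1 → (n:ℝ) ^ v ≤ n ^ (μ - 1) :=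
    fun v hv => pow_le_pow_right₀ (le_of_lt hn) hv
  have hpowpos : ∀ v : ℕ, (0:ℝ) < n ^ v := fun v => pow_pos hn0 v
  -- positivity of D
  have hDpos : 0 < D := by
    have hrw : D = (∑ v ∈ Finset.Icc 1 (μ - 1), (H v / n ^ (v-1) - H v / n ^ (μ-1)))
        + Hjoint / n ^ (μ - 1) := by
      rw [hD, hA, Finset.sum_sub_distrib, ← Finset.sum_div]
      try ring
    rw [hrw]
    have h1 : 0 ≤ ∑ v ∈ Finset.Icc 1 (μ - 1), (H v / n ^ (v-1) - H v / n ^ (μ-1)) := by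
      apply Finset.sum_nonneg
      intro v hv
      simp only [Finset.mem_Icc] at hv
      have : H v / n ^ (μ-1) ≤ H v / n ^ (v-1) :=
        div_le_div_of_nonneg_left (le_of_lt (hHge v (by simp [Finset.mem_Icc]; omega)))
          (hpowpos _) (hpow (v-1) (by omega))
      linarith
    have h2 : 0 < Hjoint / n ^ (μ - 1) :=
      div_pos (lt_of_lt_of_le hH1pos hjl) (hpowpos _)
    linarith
  -- upper bound on D
  have hsum_split : ∑ v ∈ Finset.Icc 1 μ, H v = (∑ v ∈ Finset.Icc 1 (μ-1), H v) + H μ := by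
    have h := Finset.sum_Icc_succ_top (by omega : 1 ≤ μ - 1 + 1) H
    rwa [show μ - 1 + 1 = μ by omega] at h
  have hBle : Hjoint - ∑ v ∈ Finset.Icc 1 (μ-1), H v ≤ H 1 := by
    have h1 : Hjoint - ∑ v ∈ Finset.Icc 1 (μ-1), H v ≤ H μ := by
      rw [hsum_split] at hju; linarith
    exact le_trans h1 (mono 1 μ le_rfl h1μ le_rfl)
  have hDle : D ≤ ∑ v ∈ Finset.Icc 1 μ, H 1 / n ^ (v - 1) := by
    have hAle : A ≤ ∑ v ∈ Finset.Icc 1 (μ-1), H 1 / n ^ (v-1) := by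
      apply Finset.sum_le_sum
      intro v hv
      exact (div_le_div_iff_of_pos_right (hpowpos (v-1))).mpr (hHle1 v hv)
    have hsplit2 : ∑ v ∈ Finset.Icc 1 μ, H 1 / n ^ (v-1)
        = (∑ v ∈ Finset.Icc 1 (μ-1), H 1 / n ^ (v-1)) + H 1 / n ^ (μ-1) := by
      have h := Finset.sum_Icc_succ_top (by omega : 1 ≤ μ - 1 + 1)
        (fun v => H 1 / n ^ (v - 1))
      simp only [Nat.add_sub_cancel] at h
      rwa [show μ - 1 + 1 = μ by omega] at h
    have hB2 : (1 / n ^ (μ - 1)) * (Hjoint - ∑ v ∈ Finset.Icc 1 (μ-1), H v)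
        ≤ H 1 / n ^ (μ-1) := by
      rw [one_div, div_eq_mul_inv, mul_comm (H 1)]
      exact mul_le_mul_of_nonneg_left hBle (by positivity)
    rw [hD, hsplit2]
    linarith
  -- geometric sum
  set r := 1 / n with hr
  have hr0 : 0 < r := div_pos one_pos hn0
  have hr1 : r < 1 := by rw [hr, div_lt_one hn0]; exact hn
  have hgeom : ∑ v ∈ Finset.Icc 1 μ, H 1 / n ^ (v - 1) = H 1 * ((1 - r^μ) / (1 - r)) := by
    have h1 : ∑ v ∈ Finset.Icc 1 μ, H 1 / n ^ (v - 1)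
        = ∑ k ∈ Finset.range μ, H 1 * r ^ k := by
      rw [← Finset.Ico_add_one_right_eq_Icc, Finset.sum_Ico_eq_sum_range]
      apply Finset.sum_congr (by congr 1)
      intro k _
      rw [Nat.add_sub_cancel_left, hr, div_pow, one_pow, mul_one_div]
    rw [h1, ← Finset.mul_sum, geom_sum_eq (ne_of_lt hr1)]
    congr 1
    rw [div_eq_div_iff (sub_ne_zero.mpr (ne_of_lt hr1)) (sub_ne_zero.mpr (ne_of_gt hr1))]
    ring
  have hS_pos : 0 < (1 - r^μ) / (1 - r) :=
    div_pos (by have := pow_lt_one₀ (le_of_lt hr0) hr1 (by omega : μ ≠ 0); linarith)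
      (by linarith)
  have hfinal : (H μ / H 1) * ((1 - r) / (1 - r ^ μ)) = H μ / (H 1 * ((1 - r^μ)/(1-r))) := by
    have h1 : (1:ℝ) - r ≠ 0 := by linarith
    have h2 : (1:ℝ) - r ^ μ ≠ 0 := by
      have := pow_lt_one₀ (le_of_lt hr0) hr1 (by omega : μ ≠ 0); linarith
    field_simp
    try ring
  rw [ge_iff_le, hfinal]
  apply div_le_div_of_nonneg_left (le_of_lt hpos) hDpos
  rw [← hgeom]
  exact hDle
end

section
/- Let n ≥ 2 and μ ≥ 2 be integers, and let H(1) ≥ ... ≥ H(μ) ≥ 0 with partial joint entropies J(v) satisfying J(0)=0, 0 ≤ J(v)-J(v-1) ≤ H(v), and J(μ) = H_joint. Then the achievable download cost D_1 = n·H_joint + Σ_{τ=2}^{μ} n(n-1)^{τ-1}·Σ_{v=1}^{μ-(τ-1)} binom(μ-v, τ-1)·H(v) is greater than or equal to the optimal download cost D_opt = Σ_{v=1}^{μ} n^{μ-v+1}·[J(v) - J(v-1)]. -/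
theorem d1_ge_dopt (n μ : ℕ) (hn : 2 ≤ n) (hμ : 2 ≤ μ)
    (H J : ℕ → ℝ) (hord : ∀ v ∈ Finset.Icc 1 (μ - 1), H (v + 1) ≤ H v)
    (hH0 : 0 ≤ H μ) (hJ0 : J 0 = 0)
    (hJH : ∀ v ∈ Finset.Icc 1 μ, 0 ≤ J v - J (v - 1) ∧ J v - J (v - 1) ≤ H v)
    (Hjoint : ℝ) (hjoint : J μ = Hjoint) :
    (n : ℝ) * Hjoint +
        ∑ τ ∈ Finset.Icc 2 μ, (n : ℝ) * ((n : ℝ) - 1) ^ (τ - 1) *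
          ∑ v ∈ Finset.Icc 1 (μ - (τ - 1)), (Nat.choose (μ - v) (τ - 1) : ℝ) * H v ≥
      ∑ v ∈ Finset.Icc 1 μ, (n : ℝ) ^ (μ - v + 1) * (J v - J (v - 1)) := by
  set d : ℕ → ℝ := fun v => J v - J (v - 1) with hd
  -- telescoping
  have hmap : Finset.Icc 1 μ =
      Finset.map ⟨fun k => k + 1, add_left_injective 1⟩ (Finset.range μ) := by
    ext x
    simp only [Finset.mem_Icc, Finset.mem_map, Finset.mem_range,
      Function.Embedding.coeFn_mk]
    constructor
    · rintro ⟨h1, h2⟩; exact ⟨x - 1, by omega, by omega⟩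
    · rintro ⟨a, ha, rfl⟩; omega
  have hsum_d : ∑ v ∈ Finset.Icc 1 μ, d v = Hjoint := by
    have h2 : ∑ v ∈ Finset.Icc 1 μ, d v = ∑ i ∈ Finset.range μ, (J (i + 1) - J i) := by
      rw [hmap, Finset.sum_map]
      apply Finset.sum_congr rfl
      intro i _
      simp [hd]
    rw [h2, Finset.sum_range_sub, hJ0, hjoint, sub_zero]
  -- binomial expansion of the power
  have key : ∀ v ∈ Finset.Icc 1 μ, (n : ℝ) ^ (μ - v + 1) =
      ∑ τ ∈ Finset.Icc 1 μ, (n : ℝ) * ((n : ℝ) - 1) ^ (τ - 1) *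
        (Nat.choose (μ - v) (τ - 1) : ℝ) := by
    intro v hv
    simp only [Finset.mem_Icc] at hv
    rw [hmap, Finset.sum_map]
    simp only [Function.Embedding.coeFn_mk, Nat.add_sub_cancel]
    have hsub : Finset.range (μ - v + 1) ⊆ Finset.range μ := by
      intro x hx
      simp only [Finset.mem_range] at *
      omega
    rw [← Finset.sum_subset hsub (by
      intro x _ hx
      simp only [Finset.mem_range, not_lt] at hx
      rw [Nat.choose_eq_zero_of_lt (by omega)]
      simp)]
    have hap := add_pow ((n : ℝ) - 1) 1 (μ - v)
    simp only [one_pow, mul_one, sub_add_cancel] at hap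
    rw [pow_succ, hap, Finset.sum_mul]
    exact Finset.sum_congr rfl fun x _ => by ring
  -- rewrite RHS
  have hRHS : ∑ v ∈ Finset.Icc 1 μ, (n : ℝ) ^ (μ - v + 1) * d v =
      (n : ℝ) * Hjoint + ∑ τ ∈ Finset.Icc 2 μ, (n : ℝ) * ((n : ℝ) - 1) ^ (τ - 1) *
        ∑ v ∈ Finset.Icc 1 μ, (Nat.choose (μ - v) (τ - 1) : ℝ) * d v := by
    calc ∑ v ∈ Finset.Icc 1 μ, (n : ℝ) ^ (μ - v + 1) * d v
        = ∑ v ∈ Finset.Icc 1 μ, ∑ τ ∈ Finset.Icc 1 μ,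
            (n : ℝ) * ((n : ℝ) - 1) ^ (τ - 1) * (Nat.choose (μ - v) (τ - 1) : ℝ) * d v := by
          apply Finset.sum_congr rfl
          intro v hv
          rw [key v hv, Finset.sum_mul]
      _ = ∑ τ ∈ Finset.Icc 1 μ, ∑ v ∈ Finset.Icc 1 μ,
            (n : ℝ) * ((n : ℝ) - 1) ^ (τ - 1) * (Nat.choose (μ - v) (τ - 1) : ℝ) * d v :=
          Finset.sum_comm
      _ = (n : ℝ) * Hjoint + ∑ τ ∈ Finset.Icc 2 μ, (n : ℝ) * ((n : ℝ) - 1) ^ (τ - 1) *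
            ∑ v ∈ Finset.Icc 1 μ, (Nat.choose (μ - v) (τ - 1) : ℝ) * d v := by
          have h1 : Finset.Icc 1 μ = insert 1 (Finset.Icc 2 μ) := by
            ext x; simp [Finset.mem_Icc, Finset.mem_insert]; omega
          rw [h1, Finset.sum_insert (by simp)]
          congr 1
          · simp only [Nat.sub_self, pow_zero, Nat.choose_zero_right, Nat.cast_one,
              mul_one]
            rw [← Finset.mul_sum, ← h1, hsum_d]
          · apply Finset.sum_congr rfl
            intro τ _
            rw [Finset.mul_sum]
            apply Finset.sum_congr rfl
            intro v _
            ring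
  rw [ge_iff_le, hRHS]
  apply add_le_add_right
  apply Finset.sum_le_sum
  intro τ hτ
  simp only [Finset.mem_Icc] at hτ
  apply mul_le_mul_of_nonneg_left
  · -- ∑ v ∈ Icc 1 μ, C * d v ≤ ∑ v ∈ Icc 1 (μ-(τ-1)), C * H v
    have hsub : Finset.Icc 1 (μ - (τ - 1)) ⊆ Finset.Icc 1 μ := by
      intro x hx
      simp only [Finset.mem_Icc] at *
      omega
    rw [← Finset.sum_subset hsub (by
      intro x hx hx'
      simp only [Finset.mem_Icc] at hx hx'
      rw [Nat.choose_eq_zero_of_lt (by omega)]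
      simp)]
    apply Finset.sum_le_sum
    intro v hv
    simp only [Finset.mem_Icc] at hv
    have hvμ : v ∈ Finset.Icc 1 μ := by simp only [Finset.mem_Icc]; omega
    exact mul_le_mul_of_nonneg_left (hJH v hvμ).2 (by positivity)
  · have h0 : (0 : ℝ) ≤ (n : ℝ) - 1 := by
      have : (1 : ℝ) ≤ (n : ℝ) := by exact_mod_cast Nat.one_le_of_lt hn
      linarith
    exact mul_nonneg (by positivity) (pow_nonneg h0 _)
end

section
/- For real n > 1 and integers f ≥ 1, μ ≥ f + 2, and entropies H(v) ∈ [0,1] for v ∈ [f+1:μ-1], the rate in Corollary 3, R = H_min(1-1/n)/[1-(1/n)^f + (1-1/n)Σ_{v=f+1}^{μ-1} H(v)(1/n^{v-1} - 1/n^{μ-1})], is greater than or equal to H_min·(1-1/n)/(1-(1/n)^μ). -/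
theorem pmc_rate_ge_virtual (n : ℝ) (hn : 1 < n) (f μ : ℕ) (hf : 1 ≤ f)
    (hμ : f + 2 ≤ μ) (H : ℕ → ℝ)
    (hH : ∀ v ∈ Finset.Icc (f + 1) (μ - 1), 0 ≤ H v ∧ H v ≤ 1)
    (Hmin : ℝ) (hmin : 0 < Hmin) (hmin1 : Hmin ≤ 1) :
    Hmin * (1 - 1 / n) /
        (1 - (1 / n) ^ f +
          (1 - 1 / n) * ∑ v ∈ Finset.Icc (f + 1) (μ - 1),
            H v * (1 / n ^ (v - 1) - 1 / n ^ (μ - 1))) ≥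
      Hmin * (1 - 1 / n) / (1 - (1 / n) ^ μ) := by
  have hn0 : (0:ℝ) < n := by linarith
  have hn0' : n ≠ 0 := ne_of_gt hn0
  have hinv1 : 1 / n < 1 := by rw [div_lt_one hn0]; exact hn
  have hinv0 : (0:ℝ) ≤ 1 / n := by positivity
  have hnum : 0 ≤ Hmin * (1 - 1 / n) := by nlinarith
  -- term bounds
  have hterm : ∀ v ∈ Finset.Icc (f + 1) (μ - 1),
      (0:ℝ) ≤ 1 / n ^ (v - 1) - 1 / n ^ (μ - 1) := by
    intro v hv
    obtain ⟨h1, h2⟩ := Finset.mem_Icc.mp hv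
    have hvm : v - 1 ≤ μ - 1 := by omega
    have : (1:ℝ) / n ^ (μ - 1) ≤ 1 / n ^ (v - 1) := by
      apply one_div_le_one_div_of_le (by positivity)
      exact pow_le_pow_right₀ (le_of_lt hn) hvm
    linarith
  have hS0 : (0:ℝ) ≤ ∑ v ∈ Finset.Icc (f + 1) (μ - 1),
      H v * (1 / n ^ (v - 1) - 1 / n ^ (μ - 1)) := by
    apply Finset.sum_nonneg
    intro v hv
    exact mul_nonneg (hH v hv).1 (hterm v hv)
  have hSle : ∑ v ∈ Finset.Icc (f + 1) (μ - 1),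
      H v * (1 / n ^ (v - 1) - 1 / n ^ (μ - 1))
      ≤ ∑ v ∈ Finset.Icc (f + 1) (μ - 1), (1 / n ^ (v - 1) : ℝ) := by
    apply Finset.sum_le_sum
    intro v hv
    have h1 := (hH v hv).2
    have ht := hterm v hv
    have hpos : (0:ℝ) ≤ 1 / n ^ (μ - 1) := by positivity
    nlinarith
  -- telescoping sum
  have key : (1 - 1 / n) * ∑ v ∈ Finset.Icc (f + 1) (μ - 1), (1 / n ^ (v - 1) : ℝ)
      = 1 / n ^ f - 1 / n ^ (μ - 1) := by
    have hIcc : Finset.Icc (f + 1) (μ - 1) = Finset.Ico (f + 1) μ := by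
      rw [← Finset.Ico_add_one_right_eq_Icc]
      congr 1
      omega
    rw [hIcc, Finset.sum_Ico_eq_sum_range]
    have hk : μ - (f + 1) = μ - 1 - f := by omega
    rw [hk, Finset.mul_sum]
    have hstep : ∀ i, (1 - 1 / n) * (1 / n ^ (f + 1 + i - 1) : ℝ)
        = 1 / n ^ (f + i) - 1 / n ^ (f + (i + 1)) := by
      intro i
      have hidx : f + 1 + i - 1 = f + i := by omega
      rw [hidx, pow_add, pow_add, pow_succ]
      field_simp
    rw [Finset.sum_congr rfl (fun i _ => hstep i)]
    rw [Finset.sum_range_sub' (fun i => (1 / n ^ (f + i) : ℝ))]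
    have : f + (μ - 1 - f) = μ - 1 := by omega
    rw [this, add_zero]
  -- denominator bounds
  have hpf : (1 / n) ^ f = 1 / n ^ f := by rw [one_div, inv_pow, one_div]
  have hpμ : (1 / n) ^ μ = 1 / n ^ μ := by rw [one_div, inv_pow, one_div]
  have hDle : 1 - (1 / n) ^ f +
      (1 - 1 / n) * ∑ v ∈ Finset.Icc (f + 1) (μ - 1),
        H v * (1 / n ^ (v - 1) - 1 / n ^ (μ - 1)) ≤ 1 - (1 / n) ^ μ := by
    have h1 : (1 - 1 / n) * ∑ v ∈ Finset.Icc (f + 1) (μ - 1),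
        H v * (1 / n ^ (v - 1) - 1 / n ^ (μ - 1))
        ≤ (1 - 1 / n) * ∑ v ∈ Finset.Icc (f + 1) (μ - 1), (1 / n ^ (v - 1) : ℝ) :=
      mul_le_mul_of_nonneg_left hSle (by linarith)
    have h2 : (1:ℝ) / n ^ μ ≤ 1 / n ^ (μ - 1) := by
      apply one_div_le_one_div_of_le (by positivity)
      exact pow_le_pow_right₀ (le_of_lt hn) (by omega)
    rw [hpf, hpμ]
    rw [key] at h1
    linarith
  have hDpos : 0 < 1 - (1 / n) ^ f +
      (1 - 1 / n) * ∑ v ∈ Finset.Icc (f + 1) (μ - 1),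
        H v * (1 / n ^ (v - 1) - 1 / n ^ (μ - 1)) := by
    have hlt : (1 / n) ^ f < 1 := pow_lt_one₀ hinv0 hinv1 (by omega)
    nlinarith
  exact div_le_div_of_nonneg_left hnum hDpos hDle
end
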